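/- arXiv:math/0701398 — 2 statements merged into one kernel-verified Lean document; each statement's English description precedes it below -/
import Mathlib

section
/- Let F ∈ F^n with radial function ρ. For an arbitrary x ∈ S^n, let M(x) be an outward normal to a hyperplane supporting F at r(x) = ρ(x)x, rescaled so that ⟨M(x),x⟩ = ρ(x). Then v = −M(x) + ρ(x)x belongs to the subdifferential ∂ρ(x). Conversely, for each v ∈ ∂ρ(x) there exists a unique hyperplane supporting F at r(x) with outward normal M(x) such that v = −M(x) + ρ(x)x. -/
open MeasureTheory Set
open scoped ENNReal RealInnerProductSpace NNReal

noncomputable section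

/-- Euclidean space `ℝ^{n+1}`. -/
abbrev Euc (n : ℕ) : Type := EuclideanSpace ℝ (Fin (n + 1))

/-- The unit sphere `S^n ⊂ ℝ^{n+1}` centered at the origin. -/
def uSphere (n : ℕ) : Set (Euc n) := Metric.sphere (0 : Euc n) 1

/-- The standard `n`-dimensional (Lebesgue/Hausdorff) measure `σ` on `S^n`. -/
def sphMeasure (n : ℕ) : Measure (Euc n) :=
  (μH[n] : Measure (Euc n)).restrict (uSphere n)

/-- A closed convex hypersurface `F ∈ 𝓕ⁿ` is the boundary of a compact convex set
containing the origin in its interior; we record the bounded convex body. -/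
structure ConvexBodyO (n : ℕ) where
  carrier : Set (Euc n)
  isCompact : IsCompact carrier
  convex : Convex ℝ carrier
  zero_mem_interior : (0 : Euc n) ∈ interior carrier

/-- The radial function `ρ` of `F`: `ρ(x) x ∈ F` for `x ∈ S^n`. -/
def radialFn {n : ℕ} (B : ConvexBodyO n) (x : Euc n) : ℝ :=
  sSup {t : ℝ | 0 ≤ t ∧ t • x ∈ B.carrier}

/-- The support function `h(N) = sup_{x ∈ S^n} ρ(x)⟨x,N⟩`. -/
def supportFn {n : ℕ} (B : ConvexBodyO n) (N : Euc n) : ℝ :=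
  sSup ((fun x => radialFn B x * ⟪x, N⟫) '' uSphere n)

/-- The generalized Gauss map: `α_F(x)` is the set of outward unit normals of hyperplanes
supporting `F` at `ρ(x)x`. -/
def gaussMap {n : ℕ} (B : ConvexBodyO n) (x : Euc n) : Set (Euc n) :=
  {N ∈ uSphere n | ∀ y ∈ B.carrier, ⟪y, N⟫ ≤ ⟪radialFn B x • x, N⟫}

/-- `α_F(ω) = ⋃_{x ∈ ω} α_F(x)`. -/
def gaussImage {n : ℕ} (B : ConvexBodyO n) (ω : Set (Euc n)) : Set (Euc n) :=
  ⋃ x ∈ ω, gaussMap B x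

/-- A subset `ω ⊆ S^n` is spherically convex if the cone over `ω` with vertex at `O`
is convex. -/
def SphericallyConvex (n : ℕ) (ω : Set (Euc n)) : Prop :=
  ω ⊆ uSphere n ∧ Convex ℝ {y : Euc n | ∃ t : ℝ, 0 ≤ t ∧ ∃ x ∈ ω, y = t • x}

/-- The dual set `ω* = {y ∈ S^n : ⟨x,y⟩ ≤ 0 ∀ x ∈ ω}`. -/
def dualSet (n : ℕ) (ω : Set (Euc n)) : Set (Euc n) :=
  {y ∈ uSphere n | ∀ x ∈ ω, ⟪x, y⟫ ≤ 0}

/-- The subdifferential `∂f(x₀)` of `f ∈ C(S^n)` at `x₀ ∈ S^n`: the set of tangent vectors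
`v` at `x₀` (`⟨v,x₀⟩ = 0`) with `f(x)⟨-v + f(x₀)x₀, x⟩ ≤ f(x₀)²` for all `x ∈ S^n`. -/
def subdiffS (n : ℕ) (f : Euc n → ℝ) (x₀ : Euc n) : Set (Euc n) :=
  {v : Euc n | ⟪v, x₀⟫ = 0 ∧ ∀ x ∈ uSphere n, f x * ⟪-v + f x₀ • x₀, x⟫ ≤ f x₀ ^ 2}

lemma sphere_norm' {n : ℕ} {x : Euc n} (hx : x ∈ uSphere n) : ‖x‖ = 1 := by
  simpa [uSphere, mem_sphere_zero_iff_norm] using hx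

lemma radial_bdd {n : ℕ} (B : ConvexBodyO n) {x : Euc n} (hx : ‖x‖ = 1) :
    BddAbove {t : ℝ | 0 ≤ t ∧ t • x ∈ B.carrier} := by
  obtain ⟨R, hR⟩ := B.isCompact.isBounded.subset_closedBall 0
  refine ⟨R, fun t ht => ?_⟩
  have := hR ht.2
  rw [Metric.mem_closedBall, dist_zero_right, norm_smul, hx, mul_one,
    Real.norm_eq_abs, abs_of_nonneg ht.1] at this
  exact this

lemma radial_mem {n : ℕ} (B : ConvexBodyO n) {x : Euc n} (hx : ‖x‖ = 1) :
    (radialFn B x) • x ∈ B.carrier ∧ 0 ≤ radialFn B x := by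
  have hcl : IsClosed {t : ℝ | 0 ≤ t ∧ t • x ∈ B.carrier} := by
    have : {t : ℝ | 0 ≤ t ∧ t • x ∈ B.carrier}
        = Set.Ici (0 : ℝ) ∩ (fun t : ℝ => t • x) ⁻¹' B.carrier := by
      ext t; simp [Set.mem_Ici, and_comm]
    rw [this]
    exact isClosed_Ici.inter
      (B.isCompact.isClosed.preimage (continuous_id.smul continuous_const))
  have hne : ({t : ℝ | 0 ≤ t ∧ t • x ∈ B.carrier}).Nonempty :=
    ⟨0, le_refl 0, by simpa using interior_subset B.zero_mem_interior⟩
  have := hcl.csSup_mem hne (radial_bdd B hx)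
  exact ⟨this.2, this.1⟩

lemma radial_ge {n : ℕ} (B : ConvexBodyO n) {x : Euc n} (hx : ‖x‖ = 1)
    {t : ℝ} (ht : 0 ≤ t) (h : t • x ∈ B.carrier) : t ≤ radialFn B x :=
  le_csSup (radial_bdd B hx) ⟨ht, h⟩

/-- Geometric meaning of the subdifferential of the radial function: if `M` is an outward
normal to a hyperplane supporting `F` at `r(x) = ρ(x)x`, rescaled so that `⟨M,x⟩ = ρ(x)`,
then `v = -M + ρ(x)x ∈ ∂ρ(x)`; conversely, every `v ∈ ∂ρ(x)` arises this way from a unique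
supporting hyperplane (i.e. a unique such normal `M`). -/
theorem statement8 (n : ℕ) (hn : 1 ≤ n) (B : ConvexBodyO n)
    (x : Euc n) (hx : x ∈ uSphere n) :
    (∀ M : Euc n,
      (∀ y ∈ B.carrier, ⟪y, M⟫ ≤ ⟪radialFn B x • x, M⟫) →
      ⟪M, x⟫ = radialFn B x →
      -M + radialFn B x • x ∈ subdiffS n (radialFn B) x) ∧
    (∀ v ∈ subdiffS n (radialFn B) x,
      ∃! M : Euc n,
        (∀ y ∈ B.carrier, ⟪y, M⟫ ≤ ⟪radialFn B x • x, M⟫) ∧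
        v = -M + radialFn B x • x) := by
  have hx1 : ‖x‖ = 1 := sphere_norm' hx
  set c := radialFn B x with hc
  have hxx : ⟪x, x⟫ = 1 := by
    rw [real_inner_self_eq_norm_sq, hx1]; norm_num
  constructor
  · intro M hM hMx
    have hMx' : ⟪x, M⟫ = c := by rw [real_inner_comm]; exact hMx
    constructor
    · rw [inner_add_left, inner_neg_left, real_inner_smul_left, hxx, hMx]
      ring
    · intro y hy
      have hy1 : ‖y‖ = 1 := sphere_norm' hy
      have heq : -(-M + c • x) + c • x = M := by abel
      rw [heq]
      have h1 := hM _ (radial_mem B hy1).1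
      rw [real_inner_smul_left, real_inner_smul_left, hMx'] at h1
      calc radialFn B y * ⟪M, y⟫ = radialFn B y * ⟪y, M⟫ := by rw [real_inner_comm]
        _ ≤ c * c := h1
        _ = c ^ 2 := by ring
  · intro v hv
    obtain ⟨hv0, hvineq⟩ := hv
    refine ⟨-v + c • x, ⟨?_, by abel⟩, ?_⟩
    · intro y hy
      have hcM : ⟪c • x, -v + c • x⟫ = c ^ 2 := by
        rw [real_inner_smul_left, inner_add_right, inner_neg_right,
          real_inner_comm v x, hv0, real_inner_smul_right, hxx]
        ring
      rw [hcM]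
      rcases eq_or_ne y 0 with rfl | hy0
      · simpa using sq_nonneg c
      · set u : Euc n := ‖y‖⁻¹ • y with hu
        have hyn : (0:ℝ) < ‖y‖ := norm_pos_iff.mpr hy0
        have hu1 : ‖u‖ = 1 := by
          rw [hu, norm_smul, norm_inv, norm_norm, inv_mul_cancel₀ hyn.ne']
        have huS : u ∈ uSphere n := by
          simp [uSphere, mem_sphere_zero_iff_norm, hu1]
        have hyu : ‖y‖ • u = y := by
          rw [hu, smul_smul, mul_inv_cancel₀ hyn.ne', one_smul]
        have hky : ⟪y, -v + c • x⟫ = ‖y‖ * ⟪u, -v + c • x⟫ := by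
          rw [← hyu, real_inner_smul_left, hyu]
        rw [hky]
        rcases le_or_gt (⟪u, -v + c • x⟫) 0 with hle | hpos
        · calc ‖y‖ * ⟪u, -v + c • x⟫ ≤ 0 :=
                mul_nonpos_of_nonneg_of_nonpos hyn.le hle
            _ ≤ c ^ 2 := sq_nonneg c
        · have ht : ‖y‖ ≤ radialFn B u := by
            refine radial_ge B hu1 hyn.le ?_
            rw [hyu]; exact hy
          have h2 := hvineq u huS
          rw [real_inner_comm] at h2
          calc ‖y‖ * ⟪u, -v + c • x⟫ ≤ radialFn B u * ⟪u, -v + c • x⟫ :=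
                mul_le_mul_of_nonneg_right ht hpos.le
            _ ≤ c ^ 2 := h2
    · intro M' hM'
      rw [hM'.2]; abel
end
end

section
/- Let F ∈ F^n with radial function ρ. Then for each x ∈ S^n and each N(x) ∈ α_F(x) there exists a unique v(x) ∈ ∂ρ(x) such that N(x) = (−v(x) + ρ(x)x)/√(|v(x)|² + ρ(x)²), and moreover α_F(x) = { (−v + ρ(x)x)/√(|v|² + ρ(x)²) : v ∈ ∂ρ(x) }. -/
open MeasureTheory Set
open scoped ENNReal RealInnerProductSpace NNReal

noncomputable section

/- The tangent vector `v ∈ T_x S^n` and the normal `N` determine each other through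
`-v + ρ x = λ N` with `λ = ρ / ⟨x, N⟩ > 0`, and because the body is star-shaped from the origin,
the subdifferential inequality over the boundary points `ρ(z) z` is exactly the supporting
hyperplane inequality over the whole body. -/

section NormalOfTangent

variable {E : Type*} [NormedAddCommGroup E] [InnerProductSpace ℝ E] {x v : E} {ρ : ℝ}

def normalOfTangent (x : E) (ρ : ℝ) (v : E) : E :=
  (√(‖v‖ ^ 2 + ρ ^ 2))⁻¹ • (-v + ρ • x)

lemma norm_neg_add_smul_sq (hx : ‖x‖ = 1) (hv : ⟪v, x⟫ = 0) :
    ‖-v + ρ • x‖ ^ 2 = ‖v‖ ^ 2 + ρ ^ 2 := by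
  rw [norm_add_sq_real, norm_neg, norm_smul, hx, real_inner_smul_right, inner_neg_left, hv]
  simp [sq_abs]

lemma normalOfTangent_eq (hx : ‖x‖ = 1) (hv : ⟪v, x⟫ = 0) :
    normalOfTangent x ρ v = ‖-v + ρ • x‖⁻¹ • (-v + ρ • x) := by
  rw [normalOfTangent, ← norm_neg_add_smul_sq hx hv, Real.sqrt_sq (norm_nonneg _)]

lemma norm_neg_add_smul_pos (hx : ‖x‖ = 1) (hv : ⟪v, x⟫ = 0) (hρ : ρ ≠ 0) :
    0 < ‖-v + ρ • x‖ := by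
  have h := norm_neg_add_smul_sq (ρ := ρ) hx hv
  have : 0 < ρ ^ 2 := by positivity
  nlinarith [norm_nonneg (-v + ρ • x), sq_nonneg ‖v‖]

lemma inner_smul_neg_add_smul (hx : ‖x‖ = 1) (hv : ⟪v, x⟫ = 0) :
    ⟪ρ • x, -v + ρ • x⟫ = ρ ^ 2 := by
  rw [inner_add_right, inner_neg_right, real_inner_smul_left, real_inner_smul_left,
    real_inner_smul_right, real_inner_comm v x, hv, real_inner_self_eq_norm_sq, hx]
  ring

lemma norm_normalOfTangent (hx : ‖x‖ = 1) (hv : ⟪v, x⟫ = 0) (hρ : ρ ≠ 0) :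
    ‖normalOfTangent x ρ v‖ = 1 := by
  rw [normalOfTangent_eq hx hv, norm_smul, norm_inv, norm_norm,
    inv_mul_cancel₀ (norm_neg_add_smul_pos hx hv hρ).ne']

lemma inner_normalOfTangent (hx : ‖x‖ = 1) (hv : ⟪v, x⟫ = 0) :
    ⟪x, normalOfTangent x ρ v⟫ = ρ / ‖-v + ρ • x‖ := by
  rw [normalOfTangent_eq hx hv, real_inner_smul_right, inner_add_right, inner_neg_right,
    real_inner_comm v x, hv, real_inner_smul_right, real_inner_self_eq_norm_sq, hx]
  ring

lemma normalOfTangent_injOn (hx : ‖x‖ = 1) (hρ : ρ ≠ 0) :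
    InjOn (normalOfTangent x ρ) {v | ⟪v, x⟫ = 0} := by
  intro v hv v' hv' h
  have hnorm : ‖-v + ρ • x‖ = ‖-v' + ρ • x‖ := by
    have := congrArg (⟪x, ·⟫) h
    simp only [inner_normalOfTangent hx hv, inner_normalOfTangent hx hv'] at this
    exact inv_injective (mul_left_cancel₀ hρ (by simpa only [div_eq_mul_inv] using this))
  rw [normalOfTangent_eq hx hv, normalOfTangent_eq hx hv', hnorm] at h
  simpa using smul_right_injective E (inv_ne_zero (norm_neg_add_smul_pos hx hv' hρ).ne') h

lemma exists_normalOfTangent_eq (hx : ‖x‖ = 1) {N : E} (hN : ‖N‖ = 1) (hxN : 0 < ⟪x, N⟫)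
    (hρ : 0 < ρ) : ∃ v, ⟪v, x⟫ = 0 ∧ normalOfTangent x ρ v = N := by
  set c := ρ / ⟪x, N⟫
  have hc : 0 < c := div_pos hρ hxN
  have hv : ⟪ρ • x - c • N, x⟫ = 0 := by
    rw [inner_sub_left, real_inner_smul_left, real_inner_smul_left, real_inner_self_eq_norm_sq,
      hx, real_inner_comm, div_mul_cancel₀ ρ hxN.ne']
    ring
  have hw : -(ρ • x - c • N) + ρ • x = c • N := by module
  refine ⟨_, hv, ?_⟩
  rw [normalOfTangent_eq hx hv, hw, norm_smul, hN, Real.norm_eq_abs, abs_of_pos hc, mul_one,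
    smul_smul, inv_mul_cancel₀ hc.ne', one_smul]

end NormalOfTangent

lemma mem_uSphere_iff {n : ℕ} {z : Euc n} : z ∈ uSphere n ↔ ‖z‖ = 1 := by
  rw [uSphere, mem_sphere_zero_iff_norm]

namespace ConvexBodyO

variable {n : ℕ} (B : ConvexBodyO n)

lemma exists_ball_subset : ∃ r > 0, Metric.ball 0 r ⊆ B.carrier :=
  Metric.mem_nhds_iff.mp (mem_interior_iff_mem_nhds.mp B.zero_mem_interior)

lemma isCompact_radialSet {z : Euc n} (hz : ‖z‖ = 1) :
    IsCompact {t : ℝ | 0 ≤ t ∧ t • z ∈ B.carrier} := by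
  obtain ⟨R, hR⟩ := B.isCompact.isBounded.subset_closedBall 0
  have hclosed : IsClosed {t : ℝ | 0 ≤ t ∧ t • z ∈ B.carrier} :=
    isClosed_Ici.inter (B.isCompact.isClosed.preimage (continuous_id.smul continuous_const))
  refine (isCompact_Icc (a := 0) (b := R)).of_isClosed_subset hclosed ?_
  rintro t ⟨ht, htz⟩
  have := hR htz
  rw [Metric.mem_closedBall, dist_zero_right, norm_smul, hz, mul_one, Real.norm_of_nonneg ht]
    at this
  exact ⟨ht, this⟩

lemma radialFn_nonneg (z : Euc n) : 0 ≤ radialFn B z :=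
  Real.sSup_nonneg fun _ ht => ht.1

lemma radialFn_smul_mem {z : Euc n} (hz : ‖z‖ = 1) : radialFn B z • z ∈ B.carrier :=
  ((B.isCompact_radialSet hz).sSup_mem
    ⟨0, le_rfl, by simpa using interior_subset B.zero_mem_interior⟩).2

lemma le_radialFn {z : Euc n} (hz : ‖z‖ = 1) {t : ℝ} (ht : 0 ≤ t) (htz : t • z ∈ B.carrier) :
    t ≤ radialFn B z :=
  le_csSup (B.isCompact_radialSet hz).bddAbove ⟨ht, htz⟩

lemma radialFn_pos {z : Euc n} (hz : ‖z‖ = 1) : 0 < radialFn B z := by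
  obtain ⟨r, hr, hball⟩ := B.exists_ball_subset
  have hmem : (r / 2) • z ∈ B.carrier := hball <| by
    rw [mem_ball_zero_iff, norm_smul, hz, mul_one, Real.norm_of_nonneg (by positivity)]
    linarith
  linarith [B.le_radialFn hz (by positivity) hmem]

lemma forall_inner_le_iff {w : Euc n} {c : ℝ} (hc : 0 ≤ c) :
    (∀ y ∈ B.carrier, ⟪y, w⟫ ≤ c) ↔ ∀ z ∈ uSphere n, radialFn B z * ⟪z, w⟫ ≤ c := by
  refine ⟨fun h z hz => ?_, fun h y hy => ?_⟩
  · simpa [real_inner_smul_left] using h _ (B.radialFn_smul_mem (mem_uSphere_iff.mp hz))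
  rcases eq_or_ne y 0 with rfl | hy0
  · simpa using hc
  have hny : ‖y‖ ≠ 0 := norm_ne_zero_iff.mpr hy0
  set z := ‖y‖⁻¹ • y
  have hz : ‖z‖ = 1 := by rw [norm_smul, norm_inv, norm_norm, inv_mul_cancel₀ hny]
  have hyz : y = ‖y‖ • z := by rw [smul_smul, mul_inv_cancel₀ hny, one_smul]
  have hle : ‖y‖ ≤ radialFn B z := B.le_radialFn hz (norm_nonneg y) (hyz ▸ hy)
  rw [hyz, real_inner_smul_left]
  rcases le_or_gt ⟪z, w⟫ 0 with hneg | hpos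
  · exact (mul_nonpos_of_nonneg_of_nonpos (norm_nonneg y) hneg).trans hc
  · calc ‖y‖ * ⟪z, w⟫ ≤ radialFn B z * ⟪z, w⟫ := mul_le_mul_of_nonneg_right hle hpos.le
      _ ≤ c := h z (mem_uSphere_iff.mpr hz)

lemma inner_pos_of_mem_gaussMap {x N : Euc n} (hN : N ∈ gaussMap B x) : 0 < ⟪x, N⟫ := by
  obtain ⟨r, hr, hball⟩ := B.exists_ball_subset
  have hN1 : ‖N‖ = 1 := mem_uSphere_iff.mp hN.1
  have hmem : (r / 2) • N ∈ B.carrier := hball <| by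
    rw [mem_ball_zero_iff, norm_smul, hN1, mul_one, Real.norm_of_nonneg (by positivity)]
    linarith
  have hsupp := hN.2 _ hmem
  rw [real_inner_smul_left, real_inner_smul_left, real_inner_self_eq_norm_sq, hN1] at hsupp
  exact pos_of_mul_pos_right (by linarith) (B.radialFn_nonneg x)

lemma mem_subdiffS_radialFn_iff {x v : Euc n} (hx : ‖x‖ = 1) :
    v ∈ subdiffS n (radialFn B) x ↔
      ⟪v, x⟫ = 0 ∧ normalOfTangent x (radialFn B x) v ∈ gaussMap B x := by
  refine and_congr_right fun hv => ?_
  set ρ := radialFn B x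
  have hρ : ρ ≠ 0 := (B.radialFn_pos hx).ne'
  have hw : 0 < ‖-v + ρ • x‖⁻¹ := inv_pos.mpr (norm_neg_add_smul_pos hx hv hρ)
  have hsupp : (∀ y ∈ B.carrier, ⟪y, normalOfTangent x ρ v⟫ ≤ ⟪ρ • x, normalOfTangent x ρ v⟫) ↔
      ∀ y ∈ B.carrier, ⟪y, -v + ρ • x⟫ ≤ ρ ^ 2 := by
    simp only [normalOfTangent_eq hx hv, real_inner_smul_right, mul_le_mul_iff_right₀ hw,
      inner_smul_neg_add_smul hx hv]
  rw [gaussMap, mem_sep_iff, mem_uSphere_iff, and_iff_right (norm_normalOfTangent hx hv hρ),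
    hsupp, B.forall_inner_le_iff (sq_nonneg ρ)]
  simp only [real_inner_comm]

lemma exists_normalOfTangent_eq_of_mem_gaussMap {x N : Euc n} (hx : ‖x‖ = 1)
    (hN : N ∈ gaussMap B x) : ∃ v, ⟪v, x⟫ = 0 ∧ normalOfTangent x (radialFn B x) v = N :=
  exists_normalOfTangent_eq hx (mem_uSphere_iff.mp hN.1) (B.inner_pos_of_mem_gaussMap hN)
    (B.radialFn_pos hx)

lemma gaussMap_eq_image_subdiffS {x : Euc n} (hx : ‖x‖ = 1) :
    gaussMap B x = normalOfTangent x (radialFn B x) '' subdiffS n (radialFn B) x := by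
  ext N
  refine ⟨fun hN => ?_, ?_⟩
  · obtain ⟨v, hv, rfl⟩ := B.exists_normalOfTangent_eq_of_mem_gaussMap hx hN
    exact ⟨v, (B.mem_subdiffS_radialFn_iff hx).mpr ⟨hv, hN⟩, rfl⟩
  · rintro ⟨v, hv, rfl⟩
    exact ((B.mem_subdiffS_radialFn_iff hx).mp hv).2

end ConvexBodyO

theorem statement9_general (n : ℕ) (B : ConvexBodyO n)
    (x : Euc n) (hx : x ∈ uSphere n) :
    (∀ N ∈ gaussMap B x, ∃! v : Euc n, v ∈ subdiffS n (radialFn B) x ∧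
      N = (Real.sqrt (‖v‖ ^ 2 + radialFn B x ^ 2))⁻¹ • (-v + radialFn B x • x)) ∧
    gaussMap B x =
      (fun v => (Real.sqrt (‖v‖ ^ 2 + radialFn B x ^ 2))⁻¹ • (-v + radialFn B x • x)) ''
        subdiffS n (radialFn B) x := by
  have hx1 : ‖x‖ = 1 := mem_uSphere_iff.mp hx
  have himage := B.gaussMap_eq_image_subdiffS hx1
  refine ⟨fun N hN => ?_, himage⟩
  obtain ⟨v, hv, rfl⟩ := himage ▸ hN
  refine ⟨v, ⟨hv, rfl⟩, fun v' ⟨hv', hEq⟩ => ?_⟩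
  exact normalOfTangent_injOn hx1 (B.radialFn_pos hx1).ne' hv'.1 hv.1 hEq.symm

/-- Representation of the generalized Gauss map via the subdifferential of the radial
function: every `N ∈ α_F(x)` has the form `(-v + ρ(x)x)/√(|v|² + ρ(x)²)` for a unique
`v ∈ ∂ρ(x)`, and `α_F(x)` is exactly the image of `∂ρ(x)` under this formula. -/
theorem statement9 (n : ℕ) (hn : 1 ≤ n) (B : ConvexBodyO n)
    (x : Euc n) (hx : x ∈ uSphere n) :
    (∀ N ∈ gaussMap B x, ∃! v : Euc n, v ∈ subdiffS n (radialFn B) x ∧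
      N = (Real.sqrt (‖v‖ ^ 2 + radialFn B x ^ 2))⁻¹ • (-v + radialFn B x • x)) ∧
    gaussMap B x =
      (fun v => (Real.sqrt (‖v‖ ^ 2 + radialFn B x ^ 2))⁻¹ • (-v + radialFn B x • x)) ''
        subdiffS n (radialFn B) x :=
  statement9_general n B x hx
end
end
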